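/- Let (K,v) be a valued field of residue characteristic p > 0, a ∈ O_v, c ∈ K with v(c) > 0. If the polynomial X^p + cX − a factors in K[X] as a product of two non-constant polynomials, then the residue of a has a p-th root in the residue field Kv. -/

import Mathlib

open Polynomial

/-!
Since `v(c) > 0`, the polynomial `f = X^p + cX − a ∈ O_v[X]` is monic and reduces to `X^p − ā`
over the residue field. If `ā` had no `p`-th root, `X^p − ā` would be irreducible, hence so
would be the monic `f` over `O_v`, hence (Gauss's lemma, `O_v` being integrally closed) over `K`,
contradicting the factorization `f = Q * R`.
-/

namespace Polynomial

theorem monic_X_pow_add_C_mul_X_sub_C {R : Type*} [CommRing R] {n : ℕ} (hn : 1 < n) (b c : R) :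
    (X ^ n + C b * X - C c).Monic := by
  monicity!
  simp [hn.le, hn.not_ge]

theorem not_irreducible_mul_of_degree_pos {R : Type*} [CommRing R] [IsDomain R] {f g : R[X]}
    (hf : 0 < f.degree) (hg : 0 < g.degree) : ¬Irreducible (f * g) := fun h =>
  (h.isUnit_or_isUnit rfl).elim (fun hu => hf.ne' (degree_eq_zero_of_isUnit hu))
    (fun hu => hg.ne' (degree_eq_zero_of_isUnit hu))

theorem Monic.irreducible_map_fraction_map_of_irreducible_map {R S K : Type*} [CommRing R]
    [IsDomain R] [IsIntegrallyClosed R] [Field K] [Algebra R K] [IsFractionRing R K] [CommRing S]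
    [IsDomain S] (φ : R →+* S) {f : R[X]} (hf : f.Monic) (h : Irreducible (f.map φ)) :
    Irreducible (f.map (algebraMap R K)) :=
  hf.irreducible_iff_irreducible_map_fraction_map.1 (hf.irreducible_of_irreducible_map φ f h)

end Polynomial

theorem residue_has_pth_root_of_factors_general {K : Type*} [Field K]
    (O : ValuationSubring K) (p : ℕ) [Fact p.Prime]
    (a : K) (ha : a ∈ O) (c : K) (hc : O.valuation c < 1)
    (Q R : Polynomial K) (hQ : 0 < Q.degree) (hR : 0 < R.degree)
    (hfac : X ^ p + C c * X - C a = Q * R) :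
    ∃ b : IsLocalRing.ResidueField O, b ^ p = IsLocalRing.residue O ⟨a, ha⟩ := by
  have hp : p.Prime := Fact.out
  set c' : O := ⟨c, O.mem_of_valuation_le_one c hc.le⟩
  set f : O[X] := X ^ p + C c' * X - C ⟨a, ha⟩
  have hf : f.Monic := monic_X_pow_add_C_mul_X_sub_C hp.one_lt _ _
  have hf_K : f.map (algebraMap O K) = Q * R := by simp [f, c', ← hfac]
  have hc'_residue : IsLocalRing.residue O c' = 0 :=
    (IsLocalRing.residue_eq_zero_iff _).2 ((O.valuation_lt_one_iff _).2 hc)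
  have hf_residue : f.map (IsLocalRing.residue O) = X ^ p - C (IsLocalRing.residue O ⟨a, ha⟩) := by
    simp [f, hc'_residue]
  by_contra! hno_root
  have hirr : Irreducible (f.map (IsLocalRing.residue O)) :=
    hf_residue ▸ (X_pow_sub_C_irreducible_iff_of_prime hp).2 hno_root
  exact not_irreducible_mul_of_degree_pos hQ hR
    (hf_K ▸ hf.irreducible_map_fraction_map_of_irreducible_map _ hirr)

/-- Let `(K, v)` be a valued field of residue characteristic `p > 0`,
`a ∈ O_v`, and `c ∈ K` with `v(c) > 0` (i.e. `v`-valuation of `c` is `< 1` multiplicatively).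
If `X^p + cX − a` factors in `K[X]` as a product of two non-constant polynomials, then the
residue of `a` has a `p`-th root in the residue field `Kv`. -/
theorem residue_has_pth_root_of_factors {K : Type*} [Field K]
    (O : ValuationSubring K) (p : ℕ) [Fact p.Prime]
    [CharP (IsLocalRing.ResidueField O) p]
    (a : K) (ha : a ∈ O) (c : K) (hc : O.valuation c < 1)
    (Q R : Polynomial K) (hQ : 0 < Q.degree) (hR : 0 < R.degree)
    (hfac : X ^ p + C c * X - C a = Q * R) :
    ∃ b : IsLocalRing.ResidueField O, b ^ p = IsLocalRing.residue O ⟨a, ha⟩ :=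
  residue_has_pth_root_of_factors_general O p a ha c hc Q R hQ hR hfac
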